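/- arXiv:2605.03080 — 2 statements merged into one kernel-verified Lean document; each statement's English description precedes it below -/
import Mathlib

section
/- Let ε > 0 and τ > 0, define K_{τ,ε}(r) = ε + τ · log(1 + exp(r/τ)), and set h(r) = log K_{τ,ε}(r). Then h is twice differentiable on ℝ, and its derivatives are uniformly bounded: |h'(r)| ≤ 1/ε for all r ∈ ℝ, and |h''(r)| ≤ 1/(4τε) + 1/ε² for all r ∈ ℝ. -/
/-! The derivative of `K_{τ,ε}` is the logistic sigmoid `σ(r/τ) ∈ [0, 1]`, its second derivative
is `σ(1 - σ)/τ ≤ 1/(4τ)`, and `K_{τ,ε} ≥ ε`. Since `(log K)' = K'/K` and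
`(log K)'' = K''/K - (K'/K)²`, both bounds follow termwise. -/

open Real

namespace Real

noncomputable def softplus (x : ℝ) : ℝ := log (1 + exp x)

lemma softplus_nonneg (x : ℝ) : 0 ≤ softplus x :=
  log_nonneg (by linarith [exp_pos x])

lemma hasDerivAt_softplus (x : ℝ) : HasDerivAt softplus (sigmoid x) x := by
  refine (((hasDerivAt_exp x).const_add 1).log (by positivity)).congr_deriv ?_
  rw [sigmoid_def, exp_neg]
  field_simp
  ring

lemma abs_sigmoid_le_one (x : ℝ) : |sigmoid x| ≤ 1 :=
  abs_le.2 ⟨by linarith [sigmoid_nonneg x], sigmoid_le_one x⟩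

lemma abs_sigmoid_mul_one_sub_le (x : ℝ) : |sigmoid x * (1 - sigmoid x)| ≤ 1 / 4 := by
  rw [abs_of_nonneg (mul_nonneg (sigmoid_nonneg x) (by linarith [sigmoid_le_one x]))]
  nlinarith [sq_nonneg (2 * sigmoid x - 1)]

end Real

section LogComp

variable {K k k' : ℝ → ℝ} {ε c : ℝ}

lemma hasDerivAt_div_of_pos (hK : ∀ r, HasDerivAt K (k r) r) (hk : ∀ r, HasDerivAt k (k' r) r)
    (hpos : ∀ r, 0 < K r) (r : ℝ) :
    HasDerivAt (fun r => k r / K r) (k' r / K r - (k r / K r) ^ 2) r := by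
  refine ((hk r).div (hK r) (hpos r).ne').congr_deriv ?_
  field_simp [(hpos r).ne']

lemma abs_div_le_div_of_le (hε : 0 < ε) {a b : ℝ} (ha : |a| ≤ c) (hb : ε ≤ b) :
    |a / b| ≤ c / ε := by
  rw [abs_div, abs_of_pos (hε.trans_le hb)]
  exact div_le_div₀ ((abs_nonneg a).trans ha) ha hε hb

theorem log_comp_derivative_bounds (hε : 0 < ε) (hK : ∀ r, HasDerivAt K (k r) r)
    (hk : ∀ r, HasDerivAt k (k' r) r) (hKε : ∀ r, ε ≤ K r) (hk_le : ∀ r, |k r| ≤ 1)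
    (hk'_le : ∀ r, |k' r| ≤ c) (r : ℝ) :
    DifferentiableAt ℝ (fun r => log (K r)) r ∧
      DifferentiableAt ℝ (deriv fun r => log (K r)) r ∧
      |deriv (fun r => log (K r)) r| ≤ 1 / ε ∧
      |deriv (deriv fun r => log (K r)) r| ≤ c / ε + 1 / ε ^ 2 := by
  have hpos : ∀ r, 0 < K r := fun r => hε.trans_le (hKε r)
  have hlog : ∀ r, HasDerivAt (fun r => log (K r)) (k r / K r) r :=
    fun r => (hK r).log (hpos r).ne'
  have hderiv : deriv (fun r => log (K r)) = fun r => k r / K r :=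
    funext fun r => (hlog r).deriv
  have hfirst : ∀ r, |k r / K r| ≤ 1 / ε := fun r => abs_div_le_div_of_le hε (hk_le r) (hKε r)
  refine ⟨(hlog r).differentiableAt, ?_, ?_, ?_⟩
  · rw [hderiv]
    exact (hasDerivAt_div_of_pos hK hk hpos r).differentiableAt
  · rw [hderiv]
    exact hfirst r
  · rw [hderiv, (hasDerivAt_div_of_pos hK hk hpos r).deriv]
    calc |k' r / K r - (k r / K r) ^ 2|
        ≤ |k' r / K r| + |k r / K r| ^ 2 := by
          rw [← abs_pow]
          exact abs_sub _ _
      _ ≤ c / ε + (1 / ε) ^ 2 := by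
          gcongr
          exacts [abs_div_le_div_of_le hε (hk'_le r) (hKε r), hfirst r]
      _ = c / ε + 1 / ε ^ 2 := by rw [one_div_pow]

end LogComp

section SoftplusRegularizer

variable {ε τ : ℝ}

lemma hasDerivAt_add_mul_softplus_div (hτ : τ ≠ 0) (r : ℝ) :
    HasDerivAt (fun r => ε + τ * softplus (r / τ)) (sigmoid (r / τ)) r := by
  refine ((((hasDerivAt_softplus (r / τ)).comp r ((hasDerivAt_id r).div_const τ)).const_mul
    τ).const_add ε).congr_deriv ?_
  field_simp

lemma hasDerivAt_sigmoid_div (r : ℝ) :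
    HasDerivAt (fun r => sigmoid (r / τ)) (sigmoid (r / τ) * (1 - sigmoid (r / τ)) / τ) r := by
  exact ((hasDerivAt_sigmoid (r / τ)).comp r ((hasDerivAt_id r).div_const τ)).congr_deriv
    (mul_one_div _ _)

lemma abs_sigmoid_mul_one_sub_div_le (hτ : 0 < τ) (x : ℝ) :
    |sigmoid x * (1 - sigmoid x) / τ| ≤ 1 / (4 * τ) := by
  rw [abs_div, abs_of_pos hτ, ← div_div]
  exact div_le_div_of_nonneg_right (abs_sigmoid_mul_one_sub_le x) hτ.le

end SoftplusRegularizer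

/-- For `ε, τ > 0`, let `K_{τ,ε}(r) = ε + τ · log(1 + exp(r/τ))` and
`h = log ∘ K_{τ,ε}`. Then `h` is twice differentiable on `ℝ` with uniformly bounded
derivatives: `|h'(r)| ≤ 1/ε` and `|h''(r)| ≤ 1/(4τε) + 1/ε²` for all `r`. -/
theorem log_softplus_regularizer_derivative_bounds
    (ε τ : ℝ) (hε : 0 < ε) (hτ : 0 < τ)
    (K h : ℝ → ℝ)
    (hK : ∀ r : ℝ, K r = ε + τ * Real.log (1 + Real.exp (r / τ)))
    (hh : ∀ r : ℝ, h r = Real.log (K r)) :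
    ∀ r : ℝ,
      DifferentiableAt ℝ h r ∧
      DifferentiableAt ℝ (deriv h) r ∧
      |deriv h r| ≤ 1 / ε ∧
      |deriv (deriv h) r| ≤ 1 / (4 * τ * ε) + 1 / ε ^ 2 := by
  obtain rfl : K = fun r => ε + τ * softplus (r / τ) := funext hK
  obtain rfl : h = fun r => log (ε + τ * softplus (r / τ)) := funext hh
  have bounds := log_comp_derivative_bounds hε (hasDerivAt_add_mul_softplus_div hτ.ne')
    hasDerivAt_sigmoid_div
    (fun _ => le_add_of_nonneg_right (mul_nonneg hτ.le (softplus_nonneg _)))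
    (fun _ => abs_sigmoid_le_one _) (fun _ => abs_sigmoid_mul_one_sub_div_le hτ _)
  rwa [div_div] at bounds
end

section
/- Let U : ℝ^d → ℝ and ξ : ℝ^d → ℝ^m be measurable, let β > 0 and α ≥ 0, and assume Z = ∫ exp(−βU(x)) dx ∈ (0, ∞). Let π = Z⁻¹ exp(−βU(x)) dx, and assume the pushforward ξ_#π has a density ρ_ξ with respect to Lebesgue measure on ℝ^m with ρ_ξ(z) > 0 for (Lebesgue-) almost every z; set A(z) = −β⁻¹ log ρ_ξ(z). Assume further that Z_α = ∫ exp(−β(U(x) − (α/(α+1)) A(ξ(x)))) dx ∈ (0, ∞), and let ρ*_α be the probability measure with density Z_α⁻¹ exp(−β(U(x) − (α/(α+1)) A(ξ(x)))) on ℝ^d. Then the pushforward ξ_# ρ*_α has a Lebesgue density on ℝ^m proportional to ρ_ξ(z)^{1/(1+α)}. -/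
/-!
Write `κ = α / (α + 1)`. The unnormalised density of `ρ*_α` is `exp (-β U)` tilted by the
function `exp (β κ A) = ρ_ξ ^ (-κ)` of the collective variable alone. Tilting a measure by
`w ∘ ξ` multiplies the density of its `ξ`-marginal by `w`, so the marginal of `ρ*_α` has density
proportional to `ρ_ξ · ρ_ξ ^ (-κ) = ρ_ξ ^ (1 / (1 + α))`.
-/

open MeasureTheory

namespace MeasureTheory.Measure

variable {X Y : Type*} [MeasurableSpace X] [MeasurableSpace Y]

theorem map_withDensity_comp (μ : Measure X) {ξ : X → Y} (hξ : Measurable ξ)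
    {w : Y → ENNReal} (hw : Measurable w) :
    (μ.withDensity (w ∘ ξ)).map ξ = (μ.map ξ).withDensity w := by
  ext s hs
  rw [map_apply hξ hs, withDensity_apply _ (hξ hs), withDensity_apply _ hs,
    setLIntegral_map hs hw hξ, Function.comp_def]

theorem map_withDensity_comp_of_map_eq_withDensity {μ : Measure X} {ν : Measure Y}
    {ξ : X → Y} (hξ : Measurable ξ) {ρ w : Y → ENNReal} (hρ : Measurable ρ) (hw : Measurable w)
    (hmap : μ.map ξ = ν.withDensity ρ) :
    (μ.withDensity (w ∘ ξ)).map ξ = ν.withDensity (ρ * w) := by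
  rw [map_withDensity_comp μ hξ hw, hmap, withDensity_mul ν hρ hw]

end MeasureTheory.Measure

theorem Real.mul_exp_mul_log_eq_rpow {ρ : ℝ} (hρ : 0 < ρ) (s : ℝ) :
    ρ * Real.exp (s * Real.log ρ) = ρ ^ (1 + s) := by
  rw [Real.rpow_add hρ, Real.rpow_one, Real.rpow_def_of_pos hρ, mul_comm s]

theorem cv_marginal_of_entropy_penalized_minimizer_general
    (d m : ℕ) (β α : ℝ) (hβ : 0 < β) (hα : 0 ≤ α)
    (U : EuclideanSpace ℝ (Fin d) → ℝ) (hU : Measurable U)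
    (ξ : EuclideanSpace ℝ (Fin d) → EuclideanSpace ℝ (Fin m)) (hξ : Measurable ξ)
    (hZ_pos : 0 < ∫ x, Real.exp (-β * U x))
    (π : Measure (EuclideanSpace ℝ (Fin d)))
    (hπ : π = (ENNReal.ofReal (∫ x, Real.exp (-β * U x)))⁻¹ •
      volume.withDensity (fun x => ENNReal.ofReal (Real.exp (-β * U x))))
    (ρξ : EuclideanSpace ℝ (Fin m) → ℝ) (hρξ_meas : Measurable ρξ)
    (hρξ_pos : ∀ᵐ z : EuclideanSpace ℝ (Fin m), 0 < ρξ z)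
    -- `ξ_#π` has Lebesgue density `ρ_ξ`
    (hmarg : π.map ξ = volume.withDensity (fun z => ENNReal.ofReal (ρξ z)))
    (A : EuclideanSpace ℝ (Fin m) → ℝ)
    (hA : ∀ z, A z = -β⁻¹ * Real.log (ρξ z))
    -- `Z_α` is finite and strictly positive
    (hZα_pos : 0 < ∫ x, Real.exp (-β * (U x - α / (α + 1) * A (ξ x))))
    (ρα : Measure (EuclideanSpace ℝ (Fin d)))
    (hρα : ρα = (ENNReal.ofReal
        (∫ x, Real.exp (-β * (U x - α / (α + 1) * A (ξ x)))))⁻¹ •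
      volume.withDensity
        (fun x => ENNReal.ofReal (Real.exp (-β * (U x - α / (α + 1) * A (ξ x)))))) :
    ∃ c : ℝ, 0 < c ∧
      ρα.map ξ = volume.withDensity
        (fun z => ENNReal.ofReal (c * ρξ z ^ ((1 : ℝ) / (1 + α)))) := by
  set Z := ∫ x, Real.exp (-β * U x)
  set Zα := ∫ x, Real.exp (-β * (U x - α / (α + 1) * A (ξ x)))
  set w : EuclideanSpace ℝ (Fin m) → ENNReal :=
    fun z => ENNReal.ofReal (Real.exp (β * (α / (α + 1)) * A z))
  have hA_meas : Measurable A := by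
    rw [show A = fun z => -β⁻¹ * Real.log (ρξ z) from funext hA]
    fun_prop
  have hw : Measurable w := by fun_prop
  have hgibbs : Measurable fun x => ENNReal.ofReal (Real.exp (-β * U x)) := by fun_prop
  have hρ : Measurable fun z => ENNReal.ofReal (ρξ z) := by fun_prop
  have htilt : (fun x => ENNReal.ofReal (Real.exp (-β * (U x - α / (α + 1) * A (ξ x))))) =
      (fun x => ENNReal.ofReal (Real.exp (-β * U x))) * w ∘ ξ := by
    funext x
    simp only [Pi.mul_apply, Function.comp_apply, w]
    rw [← ENNReal.ofReal_mul (Real.exp_nonneg _), ← Real.exp_add]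
    ring_nf
  have hunnormalised : volume.withDensity (fun x => ENNReal.ofReal (Real.exp (-β * U x))) =
      ENNReal.ofReal Z • π := by
    rw [hπ, smul_smul, ENNReal.mul_inv_cancel (ENNReal.ofReal_pos.2 hZ_pos).ne'
      ENNReal.ofReal_ne_top, one_smul]
  have hρα' : ρα = ENNReal.ofReal (Z / Zα) • π.withDensity (w ∘ ξ) := by
    rw [hρα, htilt, withDensity_mul _ hgibbs (hw.comp hξ), hunnormalised,
      withDensity_smul_measure, smul_smul, ENNReal.ofReal_div_of_pos hZα_pos, div_eq_mul_inv,
      mul_comm]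
  refine ⟨Z / Zα, div_pos hZ_pos hZα_pos, ?_⟩
  rw [hρα', Measure.map_smul,
    Measure.map_withDensity_comp_of_map_eq_withDensity hξ hρ hw hmarg,
    ← withDensity_smul _ (hρ.mul hw)]
  refine withDensity_congr_ae (hρξ_pos.mono fun z hz => ?_)
  have hexponent : (1 : ℝ) / (1 + α) = 1 + -(α / (α + 1)) := by
    field_simp
    ring
  have hdensity : ρξ z * Real.exp (β * (α / (α + 1)) * A z) = ρξ z ^ ((1 : ℝ) / (1 + α)) := by
    rw [hexponent, ← Real.mul_exp_mul_log_eq_rpow hz, hA]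
    field_simp
  simp only [Pi.smul_apply, Pi.mul_apply, smul_eq_mul, w]
  rw [← ENNReal.ofReal_mul hz.le, hdensity, ← ENNReal.ofReal_mul (div_pos hZ_pos hZα_pos).le]

/-- **flattening of the CV marginal of the minimizer.** Let
`π ∝ exp(−βU)dx` be the Gibbs measure whose collective-variable marginal `ξ_#π` has a
(Lebesgue-a.e. positive) density `ρ_ξ`, let `A = −β⁻¹ log ρ_ξ` be the free energy, and
let `ρ*_α ∝ exp(−β(U − (α/(α+1)) A∘ξ))` (assumed normalizable). Then the pushforward
`ξ_# ρ*_α` has a Lebesgue density proportional to `ρ_ξ^{1/(1+α)}`. -/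
theorem cv_marginal_of_entropy_penalized_minimizer
    (d m : ℕ) (β α : ℝ) (hβ : 0 < β) (hα : 0 ≤ α)
    (U : EuclideanSpace ℝ (Fin d) → ℝ) (hU : Measurable U)
    (ξ : EuclideanSpace ℝ (Fin d) → EuclideanSpace ℝ (Fin m)) (hξ : Measurable ξ)
    (hZ_int : Integrable (fun x => Real.exp (-β * U x)))
    (hZ_pos : 0 < ∫ x, Real.exp (-β * U x))
    (π : Measure (EuclideanSpace ℝ (Fin d)))
    (hπ : π = (ENNReal.ofReal (∫ x, Real.exp (-β * U x)))⁻¹ •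
      volume.withDensity (fun x => ENNReal.ofReal (Real.exp (-β * U x))))
    (ρξ : EuclideanSpace ℝ (Fin m) → ℝ) (hρξ_meas : Measurable ρξ)
    (hρξ_pos : ∀ᵐ z : EuclideanSpace ℝ (Fin m), 0 < ρξ z)
    -- `ξ_#π` has Lebesgue density `ρ_ξ`
    (hmarg : π.map ξ = volume.withDensity (fun z => ENNReal.ofReal (ρξ z)))
    (A : EuclideanSpace ℝ (Fin m) → ℝ)
    (hA : ∀ z, A z = -β⁻¹ * Real.log (ρξ z))
    -- `Z_α` is finite and strictly positive
    (hZα_int : Integrable (fun x => Real.exp (-β * (U x - α / (α + 1) * A (ξ x)))))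
    (hZα_pos : 0 < ∫ x, Real.exp (-β * (U x - α / (α + 1) * A (ξ x))))
    (ρα : Measure (EuclideanSpace ℝ (Fin d)))
    (hρα : ρα = (ENNReal.ofReal
        (∫ x, Real.exp (-β * (U x - α / (α + 1) * A (ξ x)))))⁻¹ •
      volume.withDensity
        (fun x => ENNReal.ofReal (Real.exp (-β * (U x - α / (α + 1) * A (ξ x)))))) :
    ∃ c : ℝ, 0 < c ∧
      ρα.map ξ = volume.withDensity
        (fun z => ENNReal.ofReal (c * ρξ z ^ ((1 : ℝ) / (1 + α)))) :=
  cv_marginal_of_entropy_penalized_minimizer_general d m β α hβ hα U hU ξ hξ hZ_pos π hπ ρξ hρξ_meas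
    hρξ_pos hmarg A hA hZα_pos ρα hρα
end
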